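/- arXiv:1510.02719 — 3 statements merged into one kernel-verified Lean document; each statement's English description precedes it below -/
import Mathlib

section
/- For every degree n ≥ 0 and every x ∈ ℝ, the cardinal B-spline of degree n satisfies the refinability (two-scale) relation B_n(x) = 2^{-n} · Σ_{k=0}^{n+1} C(n+1, k) · B_n(2x − k), where C(n+1,k) denotes the binomial coefficient. -/
/-- The cardinal B-spline of degree `n`: `B 0` is the indicator function of the
half-open interval `[0,1)`, and `B (n+1)` is the convolution of `B n` with `B 0`,
i.e. `B (n+1) x = ∫ s in 0..1, B n (x - s)`. -/
noncomputable def cardinalBSpline : ℕ → ℝ → ℝ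
  | 0 => Set.indicator (Set.Ico (0 : ℝ) 1) (fun _ => (1 : ℝ))
  | n + 1 => fun x => ∫ s in (0 : ℝ)..1, cardinalBSpline n (x - s)

open MeasureTheory in
/-- Every cardinal B-spline is interval integrable on every interval. -/
lemma cardinalBSpline_intervalIntegrable :
    ∀ (n : ℕ) (a b : ℝ), IntervalIntegrable (cardinalBSpline n) volume a b := by
  intro n
  induction n with
  | zero =>
    intro a b
    have : Integrable (cardinalBSpline 0) volume := by
      rw [show cardinalBSpline 0 = Set.indicator (Set.Ico (0:ℝ) 1) (fun _ => (1:ℝ)) from rfl,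
        integrable_indicator_iff measurableSet_Ico]
      exact integrableOn_const (by simp) (by simp)
    exact this.intervalIntegrable
  | succ n ih =>
    have hcont : Continuous (cardinalBSpline (n + 1)) := by
      have heq : cardinalBSpline (n + 1) = fun x =>
          (∫ t in (0:ℝ)..x, cardinalBSpline n t) - ∫ t in (0:ℝ)..(x - 1), cardinalBSpline n t := by
        funext x
        show (∫ s in (0:ℝ)..1, cardinalBSpline n (x - s)) = _
        rw [intervalIntegral.integral_comp_sub_left,
          intervalIntegral.integral_interval_sub_left (ih 0 x) (ih 0 (x - 1))]
        norm_num
      rw [heq]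
      exact (intervalIntegral.continuous_primitive ih 0).sub
        ((intervalIntegral.continuous_primitive ih 0).comp (continuous_id.sub continuous_const))
    intro a b
    exact hcont.intervalIntegrable a b

open MeasureTheory in
/-- Key computation: `∫_0^1 B_n(c - 2s) ds = (B_{n+1}(c) + B_{n+1}(c-1)) / 2`. -/
lemma cardinalBSpline_half_integral (n : ℕ) (c : ℝ) :
    ∫ s in (0:ℝ)..1, cardinalBSpline n (c - 2 * s) =
      (1 / 2) * (cardinalBSpline (n + 1) c + cardinalBSpline (n + 1) (c - 1)) := by
  have h1 : (∫ s in (0:ℝ)..1, cardinalBSpline n (c - 2 * s)) =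
      (2:ℝ)⁻¹ • ∫ u in (0:ℝ)..2, cardinalBSpline n (c - u) := by
    have := intervalIntegral.integral_comp_mul_left (a := (0:ℝ)) (b := 1)
      (fun u => cardinalBSpline n (c - u)) (two_ne_zero)
    simpa using this
  have hi1 : IntervalIntegrable (fun u => cardinalBSpline n (c - u)) volume 0 1 := by
    simpa using (cardinalBSpline_intervalIntegrable n (c - 1) c).comp_sub_left c |>.symm
  have hi2 : IntervalIntegrable (fun u => cardinalBSpline n (c - u)) volume 1 2 := by
    simpa using (cardinalBSpline_intervalIntegrable n (c - 2) (c - 1)).comp_sub_left c |>.symm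
  have h2 : (∫ u in (0:ℝ)..2, cardinalBSpline n (c - u)) =
      (∫ u in (0:ℝ)..1, cardinalBSpline n (c - u)) +
      ∫ u in (1:ℝ)..2, cardinalBSpline n (c - u) :=
    (intervalIntegral.integral_add_adjacent_intervals hi1 hi2).symm
  have h3 : (∫ u in (1:ℝ)..2, cardinalBSpline n (c - u)) = cardinalBSpline (n + 1) (c - 1) := by
    have := intervalIntegral.integral_comp_add_right (a := (0:ℝ)) (b := 1)
      (fun u => cardinalBSpline n (c - u)) 1
    rw [show ((0:ℝ) + 1) = 1 from by norm_num, show ((1:ℝ) + 1) = 2 from by norm_num] at this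
    rw [← this]
    show _ = ∫ s in (0:ℝ)..1, cardinalBSpline n ((c - 1) - s)
    congr 1
    funext s
    congr 1
    ring
  have h4 : (∫ u in (0:ℝ)..1, cardinalBSpline n (c - u)) = cardinalBSpline (n + 1) c := rfl
  rw [h1, h2, h3, h4, smul_eq_mul]
  ring

/-- Pascal's rule repackaged for the two-scale sum. -/
lemma cardinalBSpline_pascal_sum (m : ℕ) (f : ℕ → ℝ) :
    ∑ k ∈ Finset.range (m + 3), ((m + 2).choose k : ℝ) * f k =
    ∑ k ∈ Finset.range (m + 2), ((m + 1).choose k : ℝ) * (f k + f (k + 1)) := by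
  have hc : ∀ k, (((m + 2).choose (k + 1)) : ℝ) =
      ((m + 1).choose k : ℝ) + ((m + 1).choose (k + 1) : ℝ) := by
    intro k
    rw [show m + 2 = (m + 1) + 1 from rfl, Nat.choose_succ_succ]
    push_cast; ring
  have h2 := Finset.sum_range_succ' (fun k => ((m + 1).choose k : ℝ) * f k) (m + 2)
  have h3 := Finset.sum_range_succ (fun k => ((m + 1).choose k : ℝ) * f k) (m + 2)
  have hz : (((m + 1).choose (m + 2)) : ℝ) = 0 := by
    rw [Nat.choose_eq_zero_of_lt (by omega)]; norm_num
  simp only [Nat.choose_zero_right, Nat.cast_one, one_mul] at h2 h3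
  rw [Finset.sum_range_succ' _ (m + 2)]
  simp only [hc, add_mul, Finset.sum_add_distrib, mul_add, Nat.choose_zero_right,
    Nat.cast_one, one_mul]
  rw [hz] at h3
  simp only [zero_mul, add_zero] at h3
  linarith [h2, h3]

open MeasureTheory in
/-- Refinability (two-scale relation) of the cardinal B-spline of degree `n`:
`B_n(x) = 2^{-n} ∑_{k=0}^{n+1} C(n+1,k) B_n(2x - k)`. -/
theorem cardinalBSpline_two_scale (n : ℕ) (x : ℝ) :
    cardinalBSpline n x =
      ((2 : ℝ) ^ n)⁻¹ *
        ∑ k ∈ Finset.range (n + 2),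
          ((n + 1).choose k : ℝ) * cardinalBSpline n (2 * x - k) := by
  induction n generalizing x with
  | zero =>
    have ind : ∀ y : ℝ, cardinalBSpline 0 y = if 0 ≤ y ∧ y < 1 then 1 else 0 := by
      intro y
      simp [cardinalBSpline, Set.indicator_apply, Set.mem_Ico]
    norm_num
    simp only [Finset.sum_range_succ, Finset.sum_range_zero, ind, Nat.choose_self,
      Nat.choose_zero_right, Nat.cast_one, Nat.cast_zero, zero_add, one_mul]
    rcases lt_or_ge x 0 with h | h
    · rw [if_neg (by rintro ⟨h1, _⟩; linarith), if_neg (by rintro ⟨h1, _⟩; linarith),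
        if_neg (by rintro ⟨h1, _⟩; linarith)]
      ring
    rcases lt_or_ge x (1/2) with h2 | h2
    · rw [if_pos ⟨h, by linarith⟩, if_pos ⟨by linarith, by linarith⟩,
        if_neg (by rintro ⟨h1, _⟩; linarith)]
      ring
    rcases lt_or_ge x 1 with h3 | h3
    · rw [if_pos ⟨h, h3⟩, if_neg (by rintro ⟨_, h1⟩; linarith),
        if_pos ⟨by linarith, by linarith⟩]
      ring
    · rw [if_neg (by rintro ⟨_, h1⟩; linarith), if_neg (by rintro ⟨_, h1⟩; linarith),
        if_neg (by rintro ⟨_, h1⟩; linarith)]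
      ring
  | succ n ih =>
    have key : ∀ s : ℝ, cardinalBSpline n (x - s) =
        ((2:ℝ) ^ n)⁻¹ * ∑ k ∈ Finset.range (n + 2),
          ((n + 1).choose k : ℝ) * cardinalBSpline n ((2 * x - k) - 2 * s) := by
      intro s
      rw [ih (x - s)]
      congr 1
      refine Finset.sum_congr rfl fun k _ => ?_
      congr 2
      ring
    have hInt : ∀ k ∈ Finset.range (n + 2), IntervalIntegrable
        (fun s => ((n + 1).choose k : ℝ) * cardinalBSpline n ((2 * x - k) - 2 * s))
        volume 0 1 := by
      intro k _
      apply IntervalIntegrable.const_mul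
      have h := ((cardinalBSpline_intervalIntegrable n (2*x - k - 2) (2*x - k)).comp_sub_left
        (2*x - k)).symm.comp_mul_left (c := 2)
      simpa using h
    calc cardinalBSpline (n + 1) x
        = ∫ s in (0:ℝ)..1, cardinalBSpline n (x - s) := rfl
      _ = ∫ s in (0:ℝ)..1, ((2:ℝ) ^ n)⁻¹ * ∑ k ∈ Finset.range (n + 2),
            ((n + 1).choose k : ℝ) * cardinalBSpline n ((2 * x - k) - 2 * s) := by
          exact intervalIntegral.integral_congr fun s _ => key s
      _ = ((2:ℝ) ^ n)⁻¹ * ∫ s in (0:ℝ)..1, ∑ k ∈ Finset.range (n + 2),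
            ((n + 1).choose k : ℝ) * cardinalBSpline n ((2 * x - k) - 2 * s) :=
          intervalIntegral.integral_const_mul _ _
      _ = ((2:ℝ) ^ n)⁻¹ * ∑ k ∈ Finset.range (n + 2), ∫ s in (0:ℝ)..1,
            ((n + 1).choose k : ℝ) * cardinalBSpline n ((2 * x - k) - 2 * s) := by
          rw [intervalIntegral.integral_finset_sum hInt]
      _ = ((2:ℝ) ^ n)⁻¹ * ∑ k ∈ Finset.range (n + 2), ((n + 1).choose k : ℝ) *
            ((1 / 2) * (cardinalBSpline (n + 1) (2 * x - k) +
              cardinalBSpline (n + 1) (2 * x - k - 1))) := by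
          congr 1
          refine Finset.sum_congr rfl fun k _ => ?_
          rw [intervalIntegral.integral_const_mul, cardinalBSpline_half_integral]
      _ = ((2:ℝ) ^ (n + 1))⁻¹ * ∑ k ∈ Finset.range (n + 1 + 2),
            ((n + 1 + 1).choose k : ℝ) * cardinalBSpline (n + 1) (2 * x - k) := by
          have pascal := cardinalBSpline_pascal_sum n
            (fun k => cardinalBSpline (n + 1) (2 * x - k))
          have hcast : ∀ k : ℕ, cardinalBSpline (n + 1) (2 * x - ((k + 1 : ℕ) : ℝ)) =
              cardinalBSpline (n + 1) (2 * x - k - 1) := by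
            intro k; congr 1; push_cast; ring
          rw [show n + 1 + 2 = n + 3 from rfl, show n + 1 + 1 = n + 2 from rfl,
            pascal]
          simp only [hcast]
          rw [Finset.mul_sum, Finset.mul_sum]
          refine Finset.sum_congr rfl fun k _ => ?_
          rw [pow_succ]
          ring
end

section
/- Let d ≥ 1, let x : ℤ → ℝ^d be a finitely supported family of control points, and let the subdivision weights be c_0 = 1/8, c_1 = 1/2, c_2 = 3/4, c_3 = 1/2, c_4 = 1/8 and c_k = 0 for all other k ∈ ℤ. Define the refined control points x̃_j = Σ_{i ∈ ℤ} c_{j − 2i} · x_i for j ∈ ℤ (so that each even-indexed new point is the combination with weights 1/8, 3/4, 1/8 of three consecutive old points and each odd-indexed new point is the average of two consecutive old points). Then the coarse and refined control points describe the same spline curve: for every ξ ∈ ℝ, Σ_{i ∈ ℤ} x_i · B_3(ξ − i) = Σ_{j ∈ ℤ} x̃_j · B_3(2ξ − j). -/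
open MeasureTheory intervalIntegral Finset

lemma B0_eq (t : ℝ) : cardinalBSpline 0 t = if 0 ≤ t ∧ t < 1 then 1 else 0 := by
  simp [cardinalBSpline, Set.indicator, Set.mem_Ico]

lemma B_ii : ∀ n, ∀ a b : ℝ, IntervalIntegrable (cardinalBSpline n) volume a b := by
  intro n
  induction n with
  | zero =>
      intro a b
      have : Integrable (cardinalBSpline 0) volume := by
        rw [show cardinalBSpline 0 = Set.indicator (Set.Ico (0:ℝ) 1) (fun _ => (1:ℝ)) from rfl]
        rw [integrable_indicator_iff measurableSet_Ico]
        exact integrableOn_const (by simp) (by simp)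
      exact this.intervalIntegrable
  | succ n ih =>
      intro a b
      have hrw : ∀ t : ℝ, cardinalBSpline (n+1) t
          = (∫ s in (0:ℝ)..t, cardinalBSpline n s) - ∫ s in (0:ℝ)..(t-1), cardinalBSpline n s := by
        intro t
        show (∫ s in (0:ℝ)..1, cardinalBSpline n (t - s)) = _
        rw [integral_comp_sub_left (cardinalBSpline n) t]
        rw [integral_interval_sub_left (ih 0 t) (ih 0 (t-1))]
        norm_num
      have hcont : Continuous (cardinalBSpline (n+1)) := by
        have h1 := continuous_primitive ih 0
        rw [funext hrw]
        exact h1.sub (h1.comp (continuous_id.sub continuous_const))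
      exact hcont.intervalIntegrable a b

lemma B_ii_sub (n : ℕ) (D : ℝ) : ∀ a b : ℝ,
    IntervalIntegrable (fun u => cardinalBSpline n (D - u)) volume a b := by
  intro a b
  have := (B_ii n (D - a) (D - b)).comp_sub_left D
  simpa using this

lemma B_ii2 (n : ℕ) (D : ℝ) : ∀ a b : ℝ,
    IntervalIntegrable (fun s => cardinalBSpline n (D - 2*s)) volume a b := by
  intro a b
  have := (B_ii_sub n D (2*a) (2*b)).comp_mul_left (c := 2)
  simpa [mul_div_cancel_left₀] using this

lemma B_succ_eq (n : ℕ) (y : ℝ) :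
    cardinalBSpline (n+1) y = ∫ v in (y-1)..y, cardinalBSpline n v := by
  show (∫ s in (0:ℝ)..1, cardinalBSpline n (y - s)) = _
  rw [integral_comp_sub_left (cardinalBSpline n) y]
  norm_num

lemma key_int (n : ℕ) (D : ℝ) :
    (∫ s in (0:ℝ)..1, cardinalBSpline n (D - 2*s))
      = (cardinalBSpline (n+1) (D - 1) + cardinalBSpline (n+1) D) / 2 := by
  have h1 : (∫ s in (0:ℝ)..1, cardinalBSpline n (D - 2*s))
      = (2:ℝ)⁻¹ • ∫ u in (0:ℝ)..2, cardinalBSpline n (D - u) := by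
    have := integral_comp_mul_left (fun u => cardinalBSpline n (D - u))
      (a := 0) (b := 1) (two_ne_zero (α := ℝ))
    simpa using this
  rw [h1, integral_comp_sub_left (cardinalBSpline n) D]
  rw [← integral_add_adjacent_intervals (a := D - 2) (b := D - 1) (c := D - 0)
    (B_ii n _ _) (B_ii n _ _)]
  rw [show D - 0 = D by ring]
  rw [B_succ_eq n (D-1), B_succ_eq n D]
  rw [show D - 1 - 1 = D - 2 by ring]
  simp [smul_eq_mul]
  ring

lemma pascal_sum (n : ℕ) (β : ℕ → ℝ) :
    ∑ k ∈ Finset.range (n+2), ((n+1).choose k : ℝ)/2^n * ((β (k+1) + β k)/2)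
      = ∑ k ∈ Finset.range (n+3), ((n+2).choose k : ℝ)/2^(n+1) * β k := by
  have h1 : ∑ k ∈ Finset.range (n+2), ((n+1).choose k : ℝ)/2^n * ((β (k+1) + β k)/2)
      = (∑ k ∈ Finset.range (n+2), ((n+1).choose k : ℝ)/2^(n+1) * β (k+1))
        + ∑ k ∈ Finset.range (n+2), ((n+1).choose k : ℝ)/2^(n+1) * β k := by
    rw [← Finset.sum_add_distrib]
    apply Finset.sum_congr rfl
    intro k _
    ring
  have h2 : ∑ k ∈ Finset.range (n+2), ((n+1).choose k : ℝ)/2^(n+1) * β k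
      = (∑ k ∈ Finset.range (n+2), ((n+1).choose (k+1) : ℝ)/2^(n+1) * β (k+1))
        + ((n+1).choose 0 : ℝ)/2^(n+1) * β 0 := by
    rw [Finset.sum_range_succ' (fun k => ((n+1).choose k : ℝ)/2^(n+1) * β k) (n+1)]
    rw [Finset.sum_range_succ (fun k => ((n+1).choose (k+1) : ℝ)/2^(n+1) * β (k+1)) (n+1)]
    simp [Nat.choose_succ_self]
  rw [h1, h2, Finset.sum_range_succ' (fun k => ((n+2).choose k : ℝ)/2^(n+1) * β k) (n+2)]
  rw [← add_assoc, ← Finset.sum_add_distrib]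
  congr 1
  apply Finset.sum_congr rfl
  intro k _
  have hp : ((n+2).choose (k+1) : ℝ) = (n+1).choose k + (n+1).choose (k+1) := by
    exact_mod_cast Nat.choose_succ_succ (n+1) k
  rw [hp]; ring

lemma B0_two_scale (t : ℝ) : cardinalBSpline 0 t
    = cardinalBSpline 0 (2*t) + cardinalBSpline 0 (2*t - 1) := by
  rw [B0_eq, B0_eq, B0_eq]
  rcases le_or_gt 0 t with h0 | h0
  · rcases lt_or_ge t 1 with h1 | h1
    · rcases lt_or_ge (2*t) 1 with h2 | h2
      · rw [if_pos ⟨h0, h1⟩, if_pos ⟨by linarith, h2⟩, if_neg (fun h => by linarith [h.1])]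
        ring
      · rw [if_pos ⟨h0, h1⟩, if_neg (fun h => by linarith [h.2]),
          if_pos ⟨by linarith, by linarith⟩]
        ring
    · rw [if_neg (fun h => by linarith [h.2]), if_neg (fun h => by linarith [h.2]),
        if_neg (fun h => by linarith [h.2])]
      ring
  · rw [if_neg (fun h => by linarith [h.1]), if_neg (fun h => by linarith [h.1]),
      if_neg (fun h => by linarith [h.1])]
    ring

lemma B_refine : ∀ n : ℕ, ∀ t : ℝ, cardinalBSpline n t =
    ∑ k ∈ Finset.range (n+2), ((n+1).choose k : ℝ) / 2^n * cardinalBSpline n (2*t - k) := by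
  intro n
  induction n with
  | zero =>
      intro t
      rw [Finset.sum_range_succ, Finset.sum_range_succ, Finset.sum_range_zero]
      norm_num
      exact B0_two_scale t
  | succ n ih =>
      intro t
      have step1 : cardinalBSpline (n+1) t
          = ∫ s in (0:ℝ)..1, ∑ k ∈ Finset.range (n+2),
              ((n+1).choose k : ℝ) / 2^n * cardinalBSpline n ((2*t - k) - 2*s) := by
        show (∫ s in (0:ℝ)..1, cardinalBSpline n (t - s)) = _
        apply intervalIntegral.integral_congr
        intro s _
        show cardinalBSpline n (t - s) = ∑ k ∈ Finset.range (n+2),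
            ((n+1).choose k : ℝ) / 2^n * cardinalBSpline n ((2*t - k) - 2*s)
        rw [ih (t - s)]
        apply Finset.sum_congr rfl
        intro k _
        ring_nf
      rw [step1, intervalIntegral.integral_finset_sum
        (f := fun (k : ℕ) (s : ℝ) => ((n+1).choose k : ℝ) / 2^n * cardinalBSpline n ((2*t - k) - 2*s))
        (fun k _ => ((B_ii2 n (2*t - k) 0 1).const_mul _))]
      have step2 : ∀ k ∈ Finset.range (n+2),
          (∫ s in (0:ℝ)..1, ((n+1).choose k : ℝ) / 2^n * cardinalBSpline n ((2*t - k) - 2*s))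
          = ((n+1).choose k : ℝ) / 2^n
              * ((cardinalBSpline (n+1) (2*t - ((k:ℝ)+1)) + cardinalBSpline (n+1) (2*t - k))/2) := by
        intro k _
        rw [intervalIntegral.integral_const_mul, key_int n (2*t - k)]
        ring_nf
      rw [Finset.sum_congr rfl step2]
      have hβ := pascal_sum n (fun j => cardinalBSpline (n+1) (2*t - j))
      push_cast at hβ ⊢
      convert hβ using 2 <;> push_cast <;> ring_nf

lemma B3_two_scale (c : ℤ → ℝ)
    (hc0 : c 0 = 1 / 8) (hc1 : c 1 = 1 / 2) (hc2 : c 2 = 3 / 4)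
    (hc3 : c 3 = 1 / 2) (hc4 : c 4 = 1 / 8) (u : ℝ) :
    cardinalBSpline 3 u = ∑ k ∈ Finset.range 5, c k * cardinalBSpline 3 (2*u - k) := by
  rw [B_refine 3 u]
  apply Finset.sum_congr rfl
  intro k hk
  simp only [Finset.mem_range] at hk
  interval_cases k <;> norm_num [Nat.choose, hc0, hc1, hc2, hc3, hc4]


/-- Cubic B-spline subdivision reproduces the spline curve: if a finitely
supported family of control points `x : ℤ → ℝ^d` is refined with the weights
`c 0 = 1/8, c 1 = 1/2, c 2 = 3/4, c 3 = 1/2, c 4 = 1/8` (and `c k = 0`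
otherwise) via `x̃ j = ∑ᶠ i, c (j - 2i) • x i`, then the coarse and refined
control points describe the same cubic spline curve. -/
theorem cubic_subdivision_reproduces_curve
    (d : ℕ) (hd : 1 ≤ d)
    (x : ℤ → Fin d → ℝ) (hx : (Function.support x).Finite)
    (c : ℤ → ℝ)
    (hc0 : c 0 = 1 / 8) (hc1 : c 1 = 1 / 2) (hc2 : c 2 = 3 / 4)
    (hc3 : c 3 = 1 / 2) (hc4 : c 4 = 1 / 8)
    (hcz : ∀ k : ℤ, k ∉ ({0, 1, 2, 3, 4} : Set ℤ) → c k = 0)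
    (xt : ℤ → Fin d → ℝ)
    (hxt : ∀ j : ℤ, xt j = ∑ᶠ i : ℤ, c (j - 2 * i) • x i) :
    ∀ ξ : ℝ,
      ∑ᶠ i : ℤ, cardinalBSpline 3 (ξ - (i : ℝ)) • x i =
        ∑ᶠ j : ℤ, cardinalBSpline 3 (2 * ξ - (j : ℝ)) • xt j := by
  intro ξ
  classical
  set S : Finset ℤ := hx.toFinset with hS
  set T : Finset ℤ := S.biUnion (fun i => Finset.Icc (2*i) (2*i+4)) with hT
  -- rewrite xt as a finite sum
  have hxt' : ∀ j : ℤ, xt j = ∑ i ∈ S, c (j - 2*i) • x i := by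
    intro j
    rw [hxt j]
    apply finsum_eq_sum_of_support_subset
    intro i hi
    have hxi : x i ≠ 0 := by
      intro h; apply hi; simp [h]
    simp [hS, Set.Finite.coe_toFinset, Function.mem_support, hxi]
  -- support bounds
  have hsupL : (Function.support fun i : ℤ => cardinalBSpline 3 (ξ - (i:ℝ)) • x i) ⊆ ↑S := by
    intro i hi
    have hxi : x i ≠ 0 := by intro h; apply hi; simp [h]
    simp [hS, Set.Finite.coe_toFinset, Function.mem_support, hxi]
  have hsupR : (Function.support fun j : ℤ => cardinalBSpline 3 (2*ξ - (j:ℝ)) • xt j) ⊆ ↑T := by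
    intro j hj
    have hxtj : xt j ≠ 0 := by intro h; apply hj; simp [h]
    rw [hxt' j] at hxtj
    have : ∃ i ∈ S, c (j - 2*i) • x i ≠ 0 := by
      by_contra h
      push_neg at h
      exact hxtj (Finset.sum_eq_zero h)
    obtain ⟨i, hiS, hne⟩ := this
    have hcne : c (j - 2*i) ≠ 0 := by
      intro h; apply hne; simp [h]
    have hmem : j - 2*i ∈ ({0, 1, 2, 3, 4} : Set ℤ) := by
      by_contra h; exact hcne (hcz _ h)
    simp only [Set.mem_insert_iff, Set.mem_singleton_iff] at hmem
    simp only [hT, Finset.coe_biUnion, Set.mem_iUnion, Finset.mem_coe, Finset.mem_Icc]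
    exact ⟨i, hiS, by omega⟩
  rw [finsum_eq_sum_of_support_subset _ hsupL, finsum_eq_sum_of_support_subset _ hsupR]
  have hR : ∑ j ∈ T, cardinalBSpline 3 (2*ξ - (j:ℝ)) • xt j
      = ∑ i ∈ S, ∑ j ∈ T, (c (j - 2*i) * cardinalBSpline 3 (2*ξ - (j:ℝ))) • x i := by
    rw [← Finset.sum_comm]
    apply Finset.sum_congr rfl
    intro j _
    rw [hxt' j, Finset.smul_sum]
    apply Finset.sum_congr rfl
    intro i _
    rw [smul_smul, mul_comm]
  have hscal : ∀ i ∈ S,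
      ∑ k ∈ Finset.range 5, c k * cardinalBSpline 3 (2*ξ - (2*(i:ℝ) + (k:ℝ)))
        = ∑ j ∈ T, c (j - 2*i) * cardinalBSpline 3 (2*ξ - (j:ℝ)) := by
    intro i hiS
    have hsub : Finset.Icc (2*i) (2*i+4) ⊆ T := by
      rw [hT]
      exact Finset.subset_biUnion_of_mem (fun i => Finset.Icc (2*i) (2*i+4)) hiS
    have hvan : ∀ j ∈ T, j ∉ Finset.Icc (2*i) (2*i+4) →
        c (j - 2*i) * cardinalBSpline 3 (2*ξ - (j:ℝ)) = 0 := by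
      intro j _ hjn
      have hm : j - 2*i ∉ ({0,1,2,3,4} : Set ℤ) := by
        simp only [Finset.mem_Icc, not_and, not_le] at hjn
        simp only [Set.mem_insert_iff, Set.mem_singleton_iff]
        omega
      rw [hcz _ hm, zero_mul]
    rw [← Finset.sum_subset hsub hvan]
    have himg : Finset.Icc (2*i) (2*i+4)
        = Finset.image (fun k : ℕ => 2*i + (k:ℤ)) (Finset.range 5) := by
      ext j
      simp only [Finset.mem_Icc, Finset.mem_image, Finset.mem_range]
      constructor
      · rintro ⟨h1, h2⟩
        exact ⟨(j - 2*i).toNat, by omega, by omega⟩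
      · rintro ⟨k, hk, rfl⟩
        omega
    rw [himg, Finset.sum_image (by intro a _ b _ h; have h' : 2*i + (a:ℤ) = 2*i + (b:ℤ) := h; omega)]
    apply Finset.sum_congr rfl
    intro k _
    have h1 : 2*i + (k:ℤ) - 2*i = (k:ℤ) := by ring
    rw [h1]
    congr 2
    push_cast
    ring
  calc ∑ i ∈ S, cardinalBSpline 3 (ξ - (i:ℝ)) • x i
      = ∑ i ∈ S, ∑ k ∈ Finset.range 5,
          (c k * cardinalBSpline 3 (2*ξ - (2*(i:ℝ) + (k:ℝ)))) • x i := by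
        apply Finset.sum_congr rfl
        intro i _
        rw [B3_two_scale c hc0 hc1 hc2 hc3 hc4 (ξ - (i:ℝ)), Finset.sum_smul]
        apply Finset.sum_congr rfl
        intro k _
        have h2 : 2*(ξ - (i:ℝ)) - (k:ℝ) = 2*ξ - (2*(i:ℝ) + (k:ℝ)) := by ring
        rw [h2]
    _ = ∑ i ∈ S, ∑ j ∈ T, (c (j - 2*i) * cardinalBSpline 3 (2*ξ - (j:ℝ))) • x i := by
        apply Finset.sum_congr rfl
        intro i hiS
        rw [← Finset.sum_smul, hscal i hiS, Finset.sum_smul]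
    _ = ∑ j ∈ T, cardinalBSpline 3 (2*ξ - (j:ℝ)) • xt j := hR.symm
end

section
/- Let d ≥ 1, let ψ : ℝ^d → ℝ be continuously differentiable with compact support, and let v : ℝ^d → ℝ^d be continuously differentiable with compact support. Then the function t ↦ ∫_{ℝ^d} ψ(x + t·v(x)) · det(I + t·Dv(x)) dx is differentiable at t = 0 with derivative ∫_{ℝ^d} ( ∇ψ(x)·v(x) + ψ(x)·(div v)(x) ) dx, where Dv(x) denotes the Jacobian matrix of v at x and (div v)(x) = trace(Dv(x)). -/
open MeasureTheory

/-- The determinant, as a continuous multilinear map in the rows. -/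
noncomputable def detCM (d : ℕ) :
    ContinuousMultilinearMap ℝ (fun _ : Fin d => (Fin d → ℝ)) ℝ :=
  MultilinearMap.mkContinuous
    (Matrix.detRowAlternating : (Fin d → ℝ) [⋀^Fin d]→ₗ[ℝ] ℝ).toMultilinearMap
    (d.factorial) (by
      intro m
      show ‖(Matrix.of m).det‖ ≤ _
      rw [Matrix.det_apply']
      calc ‖∑ σ : Equiv.Perm (Fin d), (Equiv.Perm.sign σ : ℤ) * ∏ i, Matrix.of m (σ i) i‖
          ≤ ∑ σ : Equiv.Perm (Fin d), ‖(Equiv.Perm.sign σ : ℤ) * ∏ i, Matrix.of m (σ i) i‖ :=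
            norm_sum_le _ _
        _ ≤ ∑ _σ : Equiv.Perm (Fin d), ∏ i, ‖m i‖ := by
            refine Finset.sum_le_sum fun σ _ => ?_
            have hsgn : ‖(((Equiv.Perm.sign σ : ℤˣ) : ℤ) : ℝ)‖ = 1 := by
              rcases Int.units_eq_one_or (Equiv.Perm.sign σ) with h | h <;> simp [h]
            rw [norm_mul, hsgn, one_mul]
            calc ‖∏ i, Matrix.of m (σ i) i‖ ≤ ∏ i, ‖m (σ i)‖ := by
                  rw [norm_prod]
                  refine Finset.prod_le_prod (fun i _ => norm_nonneg _) fun i _ => ?_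
                  exact norm_le_pi_norm (m (σ i)) i
              _ = ∏ i, ‖m i‖ := Equiv.prod_comp σ fun i => ‖m i‖
        _ = (d.factorial : ℝ) * ∏ i, ‖m i‖ := by
            rw [Finset.sum_const, Finset.card_univ, Fintype.card_perm, Fintype.card_fin,
              nsmul_eq_mul])

lemma detCM_apply {d : ℕ} (M : Matrix (Fin d) (Fin d) ℝ) :
    detCM d (fun i => M i) = M.det := rfl

lemma hasDerivAt_det_one_add_smul {d : ℕ} (A : Matrix (Fin d) (Fin d) ℝ) (t : ℝ) :
    HasDerivAt (fun s : ℝ => ((1 : Matrix (Fin d) (Fin d) ℝ) + s • A).det)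
      (∑ i, (((1 : Matrix (Fin d) (Fin d) ℝ) + t • A).updateRow i (A i)).det) t := by
  have hg : HasDerivAt
      (fun s : ℝ => (fun i => ((1 : Matrix (Fin d) (Fin d) ℝ) + s • A) i))
      (fun i => A i) t := by
    rw [hasDerivAt_pi]
    intro i
    have : HasDerivAt (fun s : ℝ => (1 : Matrix (Fin d) (Fin d) ℝ) i + s • A i) (A i) t := by
      simpa using ((hasDerivAt_id t).smul_const (A i)).const_add
        ((1 : Matrix (Fin d) (Fin d) ℝ) i)
    exact this
  have := ((detCM d).hasFDerivAt (x := fun i => ((1 : Matrix (Fin d) (Fin d) ℝ) + t • A) i)).comp_hasDerivAt t hg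
  refine HasDerivAt.congr_deriv this ?_
  rw [ContinuousMultilinearMap.linearDeriv_apply]
  refine Finset.sum_congr rfl fun i _ => ?_
  rfl

lemma sum_det_updateRow_one {d : ℕ} (A : Matrix (Fin d) (Fin d) ℝ) :
    ∑ i, ((1 : Matrix (Fin d) (Fin d) ℝ).updateRow i (A i)).det = A.trace := by
  have h : ∀ i, ((1 : Matrix (Fin d) (Fin d) ℝ).updateRow i (A i)).det = A i i := by
    intro i
    rw [← Matrix.det_transpose, ← Matrix.updateCol_transpose, Matrix.transpose_one,
      ← Matrix.cramer_apply, Matrix.cramer_one]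
    rfl
  simp only [h]
  rfl

open MeasureTheory

/-- The Jacobian matrix `Dv(x)` of a vector field `v : ℝ^d → ℝ^d`. -/
noncomputable def jacobianMatrix {d : ℕ} (v : (Fin d → ℝ) → (Fin d → ℝ))
    (x : Fin d → ℝ) : Matrix (Fin d) (Fin d) ℝ :=
  Matrix.of fun i j => fderiv ℝ v x (Pi.single j 1) i

/-- The divergence `(div v)(x) = trace (Dv(x))` of a vector field. -/
noncomputable def divergence {d : ℕ} (v : (Fin d → ℝ) → (Fin d → ℝ))
    (x : Fin d → ℝ) : ℝ :=
  (jacobianMatrix v x).trace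

/-- Shape derivative of a volume integral: for `ψ : ℝ^d → ℝ` and
`v : ℝ^d → ℝ^d` continuously differentiable with compact support, the function
`t ↦ ∫ ψ(x + t v(x)) det(I + t Dv(x)) dx` is differentiable at `t = 0` with
derivative `∫ (∇ψ(x)·v(x) + ψ(x) (div v)(x)) dx`. -/
theorem shape_derivative_volume_integral
    (d : ℕ) (hd : 1 ≤ d)
    (ψ : (Fin d → ℝ) → ℝ) (v : (Fin d → ℝ) → (Fin d → ℝ))
    (hψ : ContDiff ℝ 1 ψ) (hψc : HasCompactSupport ψ)
    (hv : ContDiff ℝ 1 v) (hvc : HasCompactSupport v) :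
    HasDerivAt
      (fun t : ℝ => ∫ x : Fin d → ℝ,
        ψ (x + t • v x) * ((1 : Matrix (Fin d) (Fin d) ℝ) + t • jacobianMatrix v x).det)
      (∫ x : Fin d → ℝ, (fderiv ℝ ψ x (v x) + ψ x * divergence v x)) 0 := by
  set J : (Fin d → ℝ) → Matrix (Fin d) (Fin d) ℝ := jacobianMatrix v with hJdef
  set F : ℝ → (Fin d → ℝ) → ℝ := fun t x =>
    ψ (x + t • v x) * ((1 : Matrix (Fin d) (Fin d) ℝ) + t • J x).det with hFdef
  set F' : ℝ → (Fin d → ℝ) → ℝ := fun t x =>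
    fderiv ℝ ψ (x + t • v x) (v x) * ((1 : Matrix (Fin d) (Fin d) ℝ) + t • J x).det
      + ψ (x + t • v x) *
        ∑ i, (((1 : Matrix (Fin d) (Fin d) ℝ) + t • J x).updateRow i (J x i)).det with hF'def
  -- continuity facts
  have hψcont : Continuous ψ := hψ.continuous
  have hvcont : Continuous v := hv.continuous
  have hdψ : Continuous (fderiv ℝ ψ) := hψ.continuous_fderiv one_ne_zero
  have hdv : Continuous (fderiv ℝ v) := hv.continuous_fderiv one_ne_zero
  have hJcont : Continuous J := by
    apply continuous_matrix
    intro i j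
    exact (continuous_apply i).comp ((hdv.clm_apply continuous_const))
  have hGcont : Continuous (fun p : ℝ × (Fin d → ℝ) => p.2 + p.1 • v p.2) :=
    continuous_snd.add (continuous_fst.smul (hvcont.comp continuous_snd))
  have hMcont : Continuous (fun p : ℝ × (Fin d → ℝ) =>
      (1 : Matrix (Fin d) (Fin d) ℝ) + p.1 • J p.2) :=
    continuous_const.add (continuous_fst.smul (hJcont.comp continuous_snd))
  have hF'cont : Continuous (fun p : ℝ × (Fin d → ℝ) => F' p.1 p.2) := by
    apply Continuous.add
    · exact (((hdψ.comp hGcont).clm_apply (hvcont.comp continuous_snd))).mul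
        hMcont.matrix_det
    · refine (hψcont.comp hGcont).mul (continuous_finset_sum _ fun i _ => ?_)
      exact (hMcont.matrix_updateRow i
        ((continuous_apply i).comp (hJcont.comp continuous_snd))).matrix_det
  -- vanishing outside the support of v
  have hvanish : ∀ t : ℝ, ∀ x : Fin d → ℝ, x ∉ tsupport v → F' t x = 0 := by
    intro t x hx
    have hv0 : v x = 0 := image_eq_zero_of_notMem_tsupport hx
    have hJ0 : J x = 0 := by
      have : fderiv ℝ v x = 0 := by
        by_contra h
        exact hx (support_fderiv_subset ℝ (by simpa [Function.mem_support] using h))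
      ext i j
      simp [hJdef, jacobianMatrix, this]
    simp only [hF'def, hv0, hJ0, smul_zero, add_zero, map_zero, zero_mul, zero_add]
    rw [Finset.sum_eq_zero, mul_zero]
    intro i _
    exact Matrix.det_eq_zero_of_row_eq_zero i (by simp)
  -- the uniform bound
  obtain ⟨C, hC⟩ := (((isCompact_Icc : IsCompact (Set.Icc (-1 : ℝ) 1)).prod
    hvc)).exists_bound_of_continuousOn hF'cont.continuousOn
  set bound : (Fin d → ℝ) → ℝ := (tsupport v).indicator fun _ => C with hbdef
  have hmeasK : MeasurableSet (tsupport v) := (isClosed_tsupport v).measurableSet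
  have hbound_int : Integrable bound := by
    rw [hbdef, integrable_indicator_iff hmeasK]
    exact integrableOn_const hvc.measure_lt_top.ne
  have h_bound : ∀ x : Fin d → ℝ, ∀ t ∈ Metric.ball (0 : ℝ) 1, ‖F' t x‖ ≤ bound x := by
    intro x t ht
    by_cases hx : x ∈ tsupport v
    · rw [hbdef, Set.indicator_of_mem hx]
      refine hC (t, x) ⟨?_, hx⟩
      have := Metric.mem_ball.mp ht
      rw [Real.dist_eq, sub_zero] at this
      constructor <;> linarith [abs_le.mp this.le]
    · rw [hbdef, Set.indicator_of_notMem hx, hvanish t x hx]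
      simp
  -- differentiability in t
  have h_diff : ∀ x : Fin d → ℝ, ∀ t : ℝ, HasDerivAt (fun s => F s x) (F' t x) t := by
    intro x t
    have hg : HasDerivAt (fun s : ℝ => x + s • v x) (v x) t := by
      simpa using ((hasDerivAt_id t).smul_const (v x)).const_add x
    have h1 : HasDerivAt (fun s : ℝ => ψ (x + s • v x))
        (fderiv ℝ ψ (x + t • v x) (v x)) t :=
      (hψ.differentiable one_ne_zero (x + t • v x)).hasFDerivAt.comp_hasDerivAt t hg
    exact h1.mul (hasDerivAt_det_one_add_smul (J x) t)
  -- measurability and integrability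
  have hFmeas : ∀ t : ℝ, AEStronglyMeasurable (F t) volume := by
    intro t
    exact ((hψcont.comp (hGcont.comp (Continuous.prodMk_right t))).mul
      (hMcont.comp (Continuous.prodMk_right t)).matrix_det).aestronglyMeasurable
  have hF0 : F 0 = ψ := by
    funext x
    simp [hFdef]
  have hF0int : Integrable (F 0) := by
    rw [hF0]; exact hψcont.integrable_of_hasCompactSupport hψc
  have hF'0meas : AEStronglyMeasurable (F' 0) volume :=
    (hF'cont.comp (Continuous.prodMk_right (0 : ℝ))).aestronglyMeasurable
  -- apply dominated differentiation
  have key := hasDerivAt_integral_of_dominated_loc_of_deriv_le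
    (F := F) (F' := F') (x₀ := (0 : ℝ)) (bound := bound) (μ := volume)
    (Metric.ball_mem_nhds _ one_pos) (Filter.Eventually.of_forall hFmeas) hF0int hF'0meas
    (Filter.Eventually.of_forall fun x => fun t ht => h_bound x t ht) hbound_int
    (Filter.Eventually.of_forall fun x => fun t _ => h_diff x t)
  have hF'0 : ∀ x, F' 0 x = fderiv ℝ ψ x (v x) + ψ x * divergence v x := by
    intro x
    simp only [hF'def, zero_smul, add_zero, smul_zero, Matrix.det_one, mul_one]
    rw [sum_det_updateRow_one]
    rfl
  have := key.2
  refine HasDerivAt.congr_deriv this ?_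
  exact integral_congr_ae (Filter.Eventually.of_forall fun x => hF'0 x)
end
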